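/- arXiv:1502.02714 — 5 statements merged into one kernel-verified Lean document; each statement's English description precedes it below -/
import Mathlib

section
/- Let F be a finite field of characteristic p with |F| = p^k. Then there exists a nonzero element a in F such that the polynomial T^p - a^{p-1}T - 1 has no root in F; consequently the extension of F of degree p is generated by a root of a polynomial of the form T^p - a^{p-1}T - 1. -/
/-!
Substituting `T = a Y` turns `T ^ p - a ^ (p - 1) T - 1` into `a ^ p (Y ^ p - Y - a⁻ᵖ)`, so it is
enough to find an Artin–Schreier polynomial `Y ^ p - Y - c` without roots and to solve
`a ^ p = c⁻¹`, which is possible since the Frobenius of a finite field is bijective. A value `c`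
missed by `y ↦ y ^ p - y` exists because this map identifies `0` and `1` on the finite field.

`Y ^ p - Y - c` without roots is irreducible: the roots of the minimal polynomial of a root `α`
are of the form `α + i` with `i` in the prime field, so if its degree `d` were `< p`, the sum of
its roots `d α + i` would show `α ∈ K`.
-/

open Polynomial

namespace Polynomial

theorem irreducible_comp_C_mul_X_iff {K : Type*} [Field K] {b : K} (hb : b ≠ 0) {q : K[X]} :
    Irreducible (q.comp (C b * X)) ↔ Irreducible q := by
  let := invertibleOfNonzero hb
  simpa [comp_eq_aeval] using MulEquiv.irreducible_iff (f := (algEquivCMulXAddC b 0).toMulEquiv)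

theorem X_pow_sub_C_pow_mul_X_sub_C_eq_comp {K : Type*} [Field K] {p : ℕ} (hp : p ≠ 0) {a : K}
    (ha : a ≠ 0) (c : K) :
    (X ^ p - C (a ^ (p - 1)) * X - C c : K[X]) =
      C (a ^ p) * (X ^ p - X - C (c / a ^ p)).comp (C a⁻¹ * X) := by
  have hap : a ^ p = a ^ (p - 1) * a := by rw [← pow_succ, Nat.sub_add_cancel (by omega)]
  simp only [sub_comp, pow_comp, X_comp, C_comp, mul_pow, ← C_pow, inv_pow]
  rw [mul_sub, mul_sub, ← mul_assoc, ← C_mul, mul_inv_cancel₀ (pow_ne_zero _ ha), C_1, one_mul,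
    ← mul_assoc, ← C_mul, ← C_mul, mul_div_cancel₀ _ (pow_ne_zero _ ha), hap,
    mul_assoc, mul_inv_cancel₀ ha, mul_one]

section ArtinSchreier

variable {K : Type*} [Field K] {p : ℕ}

theorem monic_X_pow_sub_X_sub_C (hp : 1 < p) (c : K) : (X ^ p - X - C c : K[X]).Monic := by
  rw [sub_sub]
  exact monic_X_pow_sub ((degree_X_add_C c).trans_lt (by exact_mod_cast hp))

theorem natDegree_X_pow_sub_X_sub_C (hp : 1 < p) (c : K) :
    (X ^ p - X - C c : K[X]).natDegree = p := by
  rw [natDegree_sub_C, FiniteField.X_pow_card_sub_X_natDegree_eq K hp]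

variable [Fact p.Prime] [CharP K p]

theorem mem_fieldRange_of_pow_sub_self_eq_of_not_dvd {E : Type*} [Field E] [IsAlgClosed E]
    [Algebra K E] {c : K} {α : E} (hα : α ^ p - α = algebraMap K E c)
    (hd : ¬ p ∣ (minpoly K α).natDegree) : α ∈ (algebraMap K E).fieldRange := by
  have : CharP E p := charP_of_injective_algebraMap (algebraMap K E).injective p
  have hf : aeval α (X ^ p - X - C c) = 0 := by simp [hα]
  have hint : IsIntegral K α :=
    ⟨_, monic_X_pow_sub_X_sub_C (Fact.out : p.Prime).one_lt c, hf⟩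
  set g := minpoly K α
  set S := (algebraMap K E).fieldRange
  have hsplit : (g.map (algebraMap K E)).Splits := IsAlgClosed.splits _
  have hroots : ∀ r ∈ g.aroots E, r - α ∈ (⊥ : Subfield E) := by
    intro r hr
    have hr : aeval r (X ^ p - X - C c) = 0 :=
      aeval_eq_zero_of_dvd_aeval_eq_zero (minpoly.dvd K α hf) (mem_aroots.mp hr).2
    simp only [map_sub, map_pow, aeval_X, aeval_C] at hr
    rw [Subfield.mem_bot_iff_pow_eq_self E p, sub_pow_char]
    linear_combination hr - hα
  have hsum : (g.aroots E).sum = g.natDegree * α + ((g.aroots E).map (· - α)).sum := by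
    rw [Multiset.sum_map_sub, Multiset.map_const', Multiset.sum_replicate, nsmul_eq_mul,
      ← hsplit.natDegree_eq_card_roots, natDegree_map, Multiset.map_id']
    ring
  have hsum_mem : (g.aroots E).sum ∈ S := by
    rw [← neg_neg (g.aroots E).sum, ← hsplit.nextCoeff_eq_neg_sum_roots_of_monic
      ((minpoly.monic hint).map _), nextCoeff_map_eq]
    exact ⟨-g.nextCoeff, map_neg _ _⟩
  have hshift_mem : ((g.aroots E).map (· - α)).sum ∈ S :=
    (bot_le : ⊥ ≤ S) (Subfield.multiset_sum_mem _ _ (by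
      simpa only [Multiset.mem_map, forall_exists_index, and_imp, forall_apply_eq_imp_iff₂]
        using hroots))
  have hd0 : (g.natDegree : E) ≠ 0 := by rwa [Ne, CharP.cast_eq_zero_iff E p]
  have hdα : (g.natDegree : E) * α ∈ S := by
    simpa only [hsum, add_sub_cancel_right] using S.sub_mem hsum_mem hshift_mem
  simpa [hd0] using S.mul_mem (S.inv_mem (natCast_mem S g.natDegree)) hdα

theorem irreducible_X_pow_sub_X_sub_C {c : K} (hc : ∀ x : K, x ^ p - x ≠ c) :
    Irreducible (X ^ p - X - C c : K[X]) := by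
  have hp := (Fact.out : p.Prime).one_lt
  have hmonic := monic_X_pow_sub_X_sub_C hp c
  have hdeg : (X ^ p - X - C c : K[X]).degree ≠ 0 := by
    rw [degree_eq_natDegree hmonic.ne_zero, natDegree_X_pow_sub_X_sub_C hp c]
    exact_mod_cast (by omega : p ≠ 0)
  obtain ⟨α, hf⟩ := IsAlgClosed.exists_aeval_eq_zero (AlgebraicClosure K) _ hdeg
  have hα : α ^ p - α = algebraMap K _ c := by simpa [sub_eq_zero] using hf
  have hint : IsIntegral K α := ⟨_, hmonic, hf⟩
  have hdvd := minpoly.dvd K α hf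
  have hle : (minpoly K α).natDegree ≤ p :=
    natDegree_X_pow_sub_X_sub_C hp c ▸ natDegree_le_of_dvd hdvd hmonic.ne_zero
  have hdeg_minpoly : (minpoly K α).natDegree = p := by
    by_contra hne
    obtain ⟨x, hx⟩ := mem_fieldRange_of_pow_sub_self_eq_of_not_dvd hα
      (Nat.not_dvd_of_pos_of_lt (minpoly.natDegree_pos hint) (hle.lt_of_ne hne))
    exact hc x ((algebraMap K (AlgebraicClosure K)).injective (by rw [map_sub, map_pow, hx, hα]))
  rw [eq_of_monic_of_dvd_of_natDegree_le (minpoly.monic hint) hmonic hdvd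
    (by rw [hdeg_minpoly, natDegree_X_pow_sub_X_sub_C hp c])]
  exact minpoly.irreducible hint

end ArtinSchreier

end Polynomial

theorem FiniteField.exists_forall_pow_sub_self_ne {K : Type*} [Field K] [Finite K] {p : ℕ}
    (hp : p ≠ 0) : ∃ c : K, ∀ x : K, x ^ p - x ≠ c := by
  have hninj : ¬ Function.Injective (fun x : K ↦ x ^ p - x) :=
    fun h ↦ zero_ne_one (h (by simp [zero_pow hp]))
  rw [Finite.injective_iff_surjective] at hninj
  simpa [Function.Surjective] using hninj

theorem stmt_0_general (p : ℕ) (hp : p.Prime)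
    (F : Type*) [Field F] [Fintype F] [CharP F p] :
    ∃ a : F, a ≠ 0 ∧ (∀ x : F, x ^ p - a ^ (p - 1) * x - 1 ≠ 0) ∧
      Irreducible (X ^ p - C (a ^ (p - 1)) * X - 1 : F[X]) := by
  have : Fact p.Prime := ⟨hp⟩
  obtain ⟨c, hc⟩ := FiniteField.exists_forall_pow_sub_self_ne (K := F) hp.ne_zero
  have hc0 : c ≠ 0 := fun h ↦ hc 0 (by simp [h, hp.ne_zero])
  obtain ⟨a, ha⟩ := surjective_frobenius F p c⁻¹
  rw [frobenius_def] at ha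
  have ha0 : a ≠ 0 := by rintro rfl; exact hc0 (by simpa [hp.ne_zero, eq_comm] using ha)
  have hf : (X ^ p - C (a ^ (p - 1)) * X - 1 : F[X]) =
      C (a ^ p) * (X ^ p - X - C c).comp (C a⁻¹ * X) := by
    simpa [ha] using X_pow_sub_C_pow_mul_X_sub_C_eq_comp hp.ne_zero ha0 1
  refine ⟨a, ha0, fun x hx ↦ hc (a⁻¹ * x) ?_, ?_⟩
  · have h : a ^ p * ((a⁻¹ * x) ^ p - a⁻¹ * x - c) = 0 := by
      simpa [hx] using (congrArg (eval x) hf).symm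
    simpa [sub_eq_zero, ha, hc0] using h
  · rw [hf, irreducible_isUnit_mul (isUnit_C.mpr (by simpa [ha] using hc0)),
      irreducible_comp_C_mul_X_iff (inv_ne_zero ha0)]
    exact irreducible_X_pow_sub_X_sub_C hc

/-- Over a finite field `F` of characteristic `p` with `|F| = p ^ k`, there is a nonzero
`a : F` such that `T ^ p - a ^ (p-1) * T - 1` has no root in `F`; consequently this
polynomial is irreducible, so a root of it generates the extension of `F` of degree `p`. -/
theorem stmt_0 (p k : ℕ) (hp : p.Prime) (hk : 0 < k)
    (F : Type*) [Field F] [Fintype F] [CharP F p]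
    (hcard : Fintype.card F = p ^ k) :
    ∃ a : F, a ≠ 0 ∧ (∀ x : F, x ^ p - a ^ (p - 1) * x - 1 ≠ 0) ∧
      Irreducible (X ^ p - C (a ^ (p - 1)) * X - 1 : F[X]) :=
  stmt_0_general p hp F
end

section
/- Let M/F be an arbitrary field extension and let h(z) ∈ M(z) be a rational function such that h(a) ∈ F for infinitely many values a ∈ F (at which h is defined). Then h(z) ∈ F(z). -/
open Polynomial

private lemma aux_exists_ker {K V W : Type*} [Field K] [AddCommGroup V] [Module K V]
    [AddCommGroup W] [Module K W] [FiniteDimensional K V] [FiniteDimensional K W]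
    (L : V →ₗ[K] W) (hlt : Module.finrank K W < Module.finrank K V) :
    ∃ v : V, v ≠ 0 ∧ L v = 0 := by
  have : ¬ Function.Injective L := fun hinj =>
    absurd (LinearMap.finrank_le_finrank_of_injective hinj) (not_le.mpr hlt)
  rw [Function.not_injective_iff] at this
  obtain ⟨x, y, hxy, hne⟩ := this
  exact ⟨x - y, sub_ne_zero.mpr hne, by simp [map_sub, hxy]⟩

private lemma aux_eval_polyOfVec {F : Type*} [Field F] {N : ℕ} (c : Fin (N+1) → F) (a : F) :
    (∑ i : Fin (N+1), C (c i) * X ^ (i : ℕ)).eval a = ∑ i : Fin (N+1), c i * a ^ (i : ℕ) := by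
  simp [eval_finset_sum]

private lemma aux_natDegree_polyOfVec {F : Type*} [Field F] {N : ℕ} (c : Fin (N+1) → F) :
    (∑ i : Fin (N+1), C (c i) * X ^ (i : ℕ)).natDegree ≤ N := by
  apply natDegree_sum_le_of_forall_le
  intro i _
  exact (natDegree_C_mul_le _ _).trans (by simp [Nat.lt_succ_iff.mp i.isLt])

private lemma aux_polyOfVec_eq_zero {F : Type*} [Field F] {N : ℕ} {c : Fin (N+1) → F}
    (h : (∑ i : Fin (N+1), C (c i) * X ^ (i : ℕ)) = 0) : c = 0 := by
  funext j
  have := congrArg (fun p => Polynomial.coeff p (j : ℕ)) h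
  simpa [finset_sum_coeff, coeff_C_mul, coeff_X_pow, Fin.val_eq_val] using this

/-- If `M/F` is a field extension and `h ∈ M(z)` is a rational function with `h(a) ∈ F`
for infinitely many `a ∈ F` at which `h` is defined, then `h ∈ F(z)`, i.e. `h` is a
ratio of polynomials with coefficients in `F`. -/
theorem stmt_8 (F M : Type*) [Field F] [Field M] [Algebra F M] (h : RatFunc M)
    (hinf : {a : F |
        Polynomial.eval (algebraMap F M a) h.denom ≠ 0 ∧
        ∃ b : F, RatFunc.eval (RingHom.id M) (algebraMap F M a) h =
          algebraMap F M b}.Infinite) :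
    ∃ n d : Polynomial F, d ≠ 0 ∧
      h = algebraMap (Polynomial M) (RatFunc M) (n.map (algebraMap F M)) /
          algebraMap (Polynomial M) (RatFunc M) (d.map (algebraMap F M)) := by
  classical
  set alg := algebraMap F M
  set p := h.num with hp
  set q := h.denom with hq
  set N : ℕ := max p.natDegree q.natDegree with hN
  -- choose 2N+1 good points
  obtain ⟨S, hSsub, hScard⟩ := hinf.exists_subset_card_eq (2 * N + 1)
  -- choose the values b a ∈ F
  set b : F → F := fun a =>
    if hx : ∃ b : F, RatFunc.eval (RingHom.id M) (alg a) h = alg b then hx.choose else 0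
    with hb
  have hbval : ∀ a ∈ S, RatFunc.eval (RingHom.id M) (alg a) h = alg (b a) := by
    intro a ha
    obtain ⟨-, hex⟩ := hSsub ha
    simp only [hb, dif_pos hex]
    exact hex.choose_spec
  have hqne : ∀ a ∈ S, q.eval (alg a) ≠ 0 := fun a ha => (hSsub ha).1
  -- key pointwise identity: p(ā) = alg (b a) * q(ā)
  have hkey : ∀ a ∈ S, p.eval (alg a) = alg (b a) * q.eval (alg a) := by
    intro a ha
    have := hbval a ha
    rw [RatFunc.eval] at this
    simp only [eval₂_eq_eval_map, map_id] at this
    rw [div_eq_iff (hqne a ha)] at this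
    exact this
  -- the F-linear map
  set evv : (Fin (N+1) → F) → F → F := fun c a => ∑ i : Fin (N+1), c i * a ^ (i : ℕ) with hevv
  set L : ((Fin (N+1) → F) × (Fin (N+1) → F)) →ₗ[F] (↥S → F) :=
    { toFun := fun cd a => evv cd.1 a.1 - b a.1 * evv cd.2 a.1
      map_add' := by
        intro x y
        funext a
        simp only [hevv, Pi.add_apply, Prod.fst_add, Prod.snd_add, add_mul,
          Finset.sum_add_distrib, mul_add]
        ring
      map_smul' := by
        intro k x
        funext a
        simp only [hevv, Pi.smul_apply, Prod.smul_fst, Prod.smul_snd, smul_eq_mul,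
          Finset.mul_sum, RingHom.id_apply]
        rw [mul_sub, Finset.mul_sum, Finset.mul_sum]
        congr 1 <;> exact Finset.sum_congr rfl fun i _ => by ring } with hL
  have hrank : Module.finrank F (↥S → F) < Module.finrank F ((Fin (N+1) → F) × (Fin (N+1) → F)) := by
    simp [Module.finrank_pi, Module.finrank_prod, hScard]
    omega
  obtain ⟨⟨c, d⟩, hcd0, hLcd⟩ := aux_exists_ker L hrank
  set n : F[X] := ∑ i : Fin (N+1), C (c i) * X ^ (i : ℕ) with hn
  set dd : F[X] := ∑ i : Fin (N+1), C (d i) * X ^ (i : ℕ) with hdd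
  have hzero : ∀ a ∈ S, n.eval a - b a * dd.eval a = 0 := by
    intro a ha
    have := congrFun hLcd ⟨a, ha⟩
    simpa [hL, hn, hdd, aux_eval_polyOfVec] using this
  -- the polynomial r vanishes at 2N+1 points but has degree ≤ 2N
  set r : M[X] := (n.map alg) * q - (dd.map alg) * p with hr
  have hmapeval : ∀ (u : F[X]) (a : F), (u.map alg).eval (alg a) = alg (u.eval a) := by
    intro u a
    rw [eval_map, eval₂_at_apply]
  have hrzero : r = 0 := by
    apply eq_zero_of_natDegree_lt_card_of_eval_eq_zero' r (S.image alg)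
    · intro x hx
      obtain ⟨a, ha, rfl⟩ := Finset.mem_image.mp hx
      simp only [hr, eval_sub, eval_mul, hmapeval]
      rw [hkey a ha]
      have : alg (n.eval a) - alg (b a) * alg (dd.eval a) = 0 := by
        rw [← map_mul, ← map_sub, hzero a ha, map_zero]
      calc alg (n.eval a) * q.eval (alg a) - alg (dd.eval a) * (alg (b a) * q.eval (alg a))
          = (alg (n.eval a) - alg (b a) * alg (dd.eval a)) * q.eval (alg a) := by ring
        _ = 0 := by rw [this, zero_mul]
    · have hcard : (S.image alg).card = 2 * N + 1 := by
        rw [Finset.card_image_of_injective _ (algebraMap F M).injective, hScard]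
      rw [hcard]
      have h1 : r.natDegree ≤ 2 * N := by
        apply (natDegree_sub_le _ _).trans
        apply max_le
        · apply natDegree_mul_le.trans
          have h1 := (natDegree_map_le (f := alg) (p := n)).trans (aux_natDegree_polyOfVec c)
          have h2 : q.natDegree ≤ N := hN ▸ le_max_right _ _
          omega
        · apply natDegree_mul_le.trans
          have h1 := (natDegree_map_le (f := alg) (p := dd)).trans (aux_natDegree_polyOfVec d)
          have h2 : p.natDegree ≤ N := hN ▸ le_max_left _ _
          omega
      omega
  have hmain : (n.map alg) * q = (dd.map alg) * p := by
    have := sub_eq_zero.mp hrzero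
    exact this
  have hddne : dd ≠ 0 := by
    intro hdd0
    have hd0 : d = 0 := aux_polyOfVec_eq_zero hdd0
    have : (n.map alg) * q = 0 := by rw [hmain, hdd0]; simp
    have hq0 : q ≠ 0 := h.denom_ne_zero
    have hnm : n.map alg = 0 := by
      rcases mul_eq_zero.mp this with h' | h'
      · exact h'
      · exact absurd h' hq0
    have hn0 : n = 0 := by
      have := (Polynomial.map_eq_zero_iff (algebraMap F M).injective).mp hnm
      exact this
    have hc0 : c = 0 := aux_polyOfVec_eq_zero hn0
    exact hcd0 (by simp [Prod.ext_iff, hc0, hd0])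
  refine ⟨n, dd, hddne, ?_⟩
  have hqRne : algebraMap (Polynomial M) (RatFunc M) q ≠ 0 :=
    RatFunc.algebraMap_ne_zero h.denom_ne_zero
  have hddRne : algebraMap (Polynomial M) (RatFunc M) (dd.map alg) ≠ 0 :=
    RatFunc.algebraMap_ne_zero ((Polynomial.map_ne_zero_iff (algebraMap F M).injective).mpr hddne)
  rw [← RatFunc.num_div_denom h, ← hp, ← hq]
  rw [div_eq_div_iff hqRne hddRne]
  rw [← map_mul, ← map_mul]
  congr 1
  rw [mul_comm p, mul_comm (n.map alg)]
  rw [mul_comm q]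
  exact hmain.symm
end

section
/- Let K be a function field of characteristic p, q a prime different from p, 𝔭 a prime (valuation) of K with ord_𝔭 t ≥ 0 and with ramification degree over F_p(t) not divisible by q. Then there exists a positive integer s̄ such that for all positive integers s divisible by s̄: ord_𝔭(t^{p^s} - t) > 0 and ord_𝔭(t^{p^s} - t) is not divisible by q. Moreover, if additionally ord_𝔭 f < 0 for some f ∈ K, then ord_𝔭((f^{q p^s} - f^q)/(t^{p^s} - t)) is not divisible by q. -/
/-!
Take `s̄ = deg P`. For `deg P ∣ s` the irreducible `P` divides the separable polynomial
`X ^ p ^ s - X` exactly once, so `ord (t ^ p ^ s - t) = e`. As `ord f < 0`, the term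
`f ^ (q * p ^ s)` dominates the numerator, whose order `q * p ^ s * ord f` is then divisible
by `q`; the quotient has order `≡ -e (mod q)`.
-/

open Polynomial

theorem Irreducible.not_sq_dvd_X_pow_sub_X {k : Type*} [Field k] (p : ℕ) [CharP k p] {f : k[X]}
    (hf : Irreducible f) {m : ℕ} (hm : p ∣ m) : ¬ f ^ 2 ∣ (X ^ m - X : k[X]) := fun h ↦
  hf.not_isUnit <| (galois_poly_separable p m hm).squarefree f (by rwa [sq] at h)

section OrdFunction

variable {K : Type*} [Field K] {v : K → ℤ}
  (hmul : ∀ x y : K, x ≠ 0 → y ≠ 0 → v (x * y) = v x + v y)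
include hmul

theorem ord_one : v 1 = 0 := by
  have := hmul 1 1 one_ne_zero one_ne_zero
  rw [mul_one] at this
  omega

theorem ord_neg {x : K} (hx : x ≠ 0) : v (-x) = v x := by
  have hv : v (-1) = 0 := by
    have := hmul (-1) (-1) (by simp) (by simp)
    rw [neg_one_mul, neg_neg, ord_one hmul] at this
    omega
  rw [← neg_one_mul, hmul _ _ (by simp) hx, hv, zero_add]

theorem ord_pow {x : K} (hx : x ≠ 0) (n : ℕ) : v (x ^ n) = n * v x := by
  induction n with
  | zero => simp [ord_one hmul]
  | succ n ih =>
    rw [pow_succ, hmul _ _ (pow_ne_zero _ hx) hx, ih]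
    push_cast
    ring

theorem ord_div {x y : K} (hx : x ≠ 0) (hy : y ≠ 0) : v (x / y) = v x - v y := by
  have := hmul (x / y) y (div_ne_zero hx hy) hy
  rw [div_mul_cancel₀ _ hy] at this
  omega

variable (hadd : ∀ x y : K, x ≠ 0 → y ≠ 0 → x + y ≠ 0 → min (v x) (v y) ≤ v (x + y))
include hadd

theorem ord_add_eq_of_lt {x y : K} (hx : x ≠ 0) (hy : y ≠ 0) (hlt : v x < v y) :
    x + y ≠ 0 ∧ v (x + y) = v x := by
  have hxy : x + y ≠ 0 := by
    intro h
    rw [eq_neg_of_add_eq_zero_right h, ord_neg hmul hx] at hlt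
    exact hlt.false
  have hle := hadd x y hx hy hxy
  have hge := hadd (x + y) (-y) hxy (neg_ne_zero.mpr hy) (by simpa using hx)
  rw [add_neg_cancel_right, ord_neg hmul hy] at hge
  refine ⟨hxy, ?_⟩
  rw [min_eq_left hlt.le] at hle
  rcases min_le_iff.mp hge with h | h <;> omega

theorem ord_pow_sub_pow_of_neg {f : K} (hf : f ≠ 0) (hvf : v f < 0) {m n : ℕ} (hmn : m < n) :
    f ^ n - f ^ m ≠ 0 ∧ v (f ^ n - f ^ m) = n * v f := by
  have hlt : v (f ^ n) < v (-f ^ m) := by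
    rw [ord_neg hmul (pow_ne_zero _ hf), ord_pow hmul hf, ord_pow hmul hf]
    exact mul_lt_mul_of_neg_right (by exact_mod_cast hmn) hvf
  rw [sub_eq_add_neg, ← ord_pow hmul hf]
  exact ord_add_eq_of_lt hmul hadd (pow_ne_zero _ hf) (neg_ne_zero.mpr (pow_ne_zero _ hf)) hlt

end OrdFunction

theorem stmt_12_general (p q : ℕ) (hp : p.Prime) (hq : q.Prime)
    (K : Type*) [Field K] [Algebra (ZMod p) K] (v : K → ℤ)
    (hmul : ∀ x y : K, x ≠ 0 → y ≠ 0 → v (x * y) = v x + v y)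
    (hadd : ∀ x y : K, x ≠ 0 → y ≠ 0 → x + y ≠ 0 → min (v x) (v y) ≤ v (x + y))
    (t : K) (htrans : ∀ g : Polynomial (ZMod p), Polynomial.aeval t g = 0 → g = 0)
    (P : Polynomial (ZMod p)) (hPirr : Irreducible P)
    (e : ℕ) (he : 0 < e) (heq : ¬ q ∣ e)
    (hbelow : ∀ (g : Polynomial (ZMod p)) (n : ℕ), g ≠ 0 → P ^ n ∣ g → ¬ P ^ (n + 1) ∣ g →
      v (Polynomial.aeval t g) = (e : ℤ) * n) :
    ∃ sbar : ℕ, 0 < sbar ∧ ∀ s : ℕ, 0 < s → sbar ∣ s →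
      0 < v (t ^ p ^ s - t) ∧ ¬ ((q : ℤ) ∣ v (t ^ p ^ s - t)) ∧
        ∀ f : K, f ≠ 0 → v f < 0 →
          ¬ ((q : ℤ) ∣ v ((f ^ (q * p ^ s) - f ^ q) / (t ^ p ^ s - t))) := by
  have : Fact p.Prime := ⟨hp⟩
  refine ⟨P.natDegree, hPirr.natDegree_pos, fun s hs hdvd ↦ ?_⟩
  have hg0 : (X ^ p ^ s - X : (ZMod p)[X]) ≠ 0 :=
    FiniteField.X_pow_card_pow_sub_X_ne_zero _ hs.ne' hp.one_lt
  have hP : P ∣ X ^ p ^ s - X := by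
    simpa using hPirr.natDegree_dvd_iff_dvd_X_pow_card_pow_sub_X.mp hdvd
  have hP2 : ¬ P ^ 2 ∣ X ^ p ^ s - X := hPirr.not_sq_dvd_X_pow_sub_X p (dvd_pow_self p hs.ne')
  have hD0 : t ^ p ^ s - t ≠ 0 := by simpa using mt (htrans _) hg0
  have hvD : v (t ^ p ^ s - t) = e := by simpa using hbelow _ 1 hg0 (by simpa) hP2
  refine ⟨by rw [hvD]; exact_mod_cast he, by rw [hvD]; exact_mod_cast heq, fun f hf hvf ↦ ?_⟩
  obtain ⟨hN0, hvN⟩ := ord_pow_sub_pow_of_neg hmul hadd hf hvf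
    (lt_mul_of_one_lt_right hq.pos (Nat.one_lt_pow hs.ne' hp.one_lt))
  have hqN : (q : ℤ) ∣ ((q * p ^ s : ℕ) : ℤ) * v f :=
    dvd_mul_of_dvd_left (by exact_mod_cast dvd_mul_right q _) _
  rw [ord_div hmul hN0 hD0, hvN, hvD, dvd_sub_right hqN]
  exact_mod_cast heq

/-- Let `K` be a function field of characteristic `p`, `q ≠ p` prime, and `v = ord_𝔭`
a discrete valuation of `K` lying (with ramification index `e`, `q ∤ e`) over the prime
of `F_p(t)` given by an irreducible polynomial `P` (so `𝔭` is not the pole of `t`,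
and `v t ≥ 0`).  Then there is `s̄ > 0` such that for all `s > 0` divisible by `s̄`:
`v (t^{p^s} - t) > 0` and `q ∤ v (t^{p^s} - t)`; moreover for any `f` with `v f < 0`,
`q ∤ v ((f^{q p^s} - f^q)/(t^{p^s} - t))`. -/
theorem stmt_12 (p q : ℕ) (hp : p.Prime) (hq : q.Prime) (hpq : p ≠ q)
    (K : Type*) [Field K] [CharP K p] [Algebra (ZMod p) K] (v : K → ℤ)
    (hmul : ∀ x y : K, x ≠ 0 → y ≠ 0 → v (x * y) = v x + v y)
    (hadd : ∀ x y : K, x ≠ 0 → y ≠ 0 → x + y ≠ 0 → min (v x) (v y) ≤ v (x + y))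
    (t : K) (htrans : ∀ g : Polynomial (ZMod p), Polynomial.aeval t g = 0 → g = 0)
    (P : Polynomial (ZMod p)) (hPirr : Irreducible P)
    (e : ℕ) (he : 0 < e) (heq : ¬ q ∣ e)
    (hbelow : ∀ (g : Polynomial (ZMod p)) (n : ℕ), g ≠ 0 → P ^ n ∣ g → ¬ P ^ (n + 1) ∣ g →
      v (Polynomial.aeval t g) = (e : ℤ) * n)
    (ht : 0 ≤ v t) :
    ∃ sbar : ℕ, 0 < sbar ∧ ∀ s : ℕ, 0 < s → sbar ∣ s →
      0 < v (t ^ p ^ s - t) ∧ ¬ ((q : ℤ) ∣ v (t ^ p ^ s - t)) ∧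
        ∀ f : K, f ≠ 0 → v f < 0 →
          ¬ ((q : ℤ) ∣ v ((f ^ (q * p ^ s) - f ^ q) / (t ^ p ^ s - t))) :=
  stmt_12_general p q hp hq K v hmul hadd t htrans P hPirr e he heq hbelow
end

section
/- (Weak Vertical Method) Let M/K be a finite separable extension of function fields with basis {ω₁ = 1, ..., ω_n} of M over K, and w = Σ a_i ω_i ∈ M with a_i ∈ K. Suppose there is a finite set 𝒱 of primes of K such that for each 𝔄 ∈ 𝒱 there is b(𝔄) ∈ K with ord_𝔠(w - b(𝔄)) ≥ e(𝔠/𝔄) for every M-factor 𝔠 of 𝔄. Assume w and all basis elements are integral at all primes of 𝒱, det²(σ_j(ω_i)) has no zeros at primes of 𝒱, and |𝒱| > max{h_K(a_i) : a_i ≠ 0, i = 2,...,n}, where h_K denotes the K-height. Then w ∈ K. -/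
/-!
Write `w - b(𝔄) = ∑ a'ᵢ ωᵢ`, so that `a'ᵢ = aᵢ` for `i ≠ 0` because `ω₀ = 1`. Applying the
conjugations gives the linear system `∑ᵢ σⱼ(ωᵢ) a'ᵢ = σⱼ(w) - b(𝔄)`, whose matrix is integral at
`𝔄` with a unit determinant. By Cramer's rule each `a'ᵢ` is then divisible by `𝔄` just like the
right-hand side. So every `aᵢ` with `i ≠ 0` vanishes at all `|𝒱|` primes of `𝒱`, more zeros than
its height allows; hence `aᵢ = 0` and `w = a₀ ∈ K`.
-/

open scoped Matrix

namespace AddValuation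

section OfNeZero

variable {L : Type*} [Ring L] [IsDomain L] (u : L → ℚ)
  (hmul : ∀ x y, x ≠ 0 → y ≠ 0 → u (x * y) = u x + u y)
  (hadd : ∀ x y, x ≠ 0 → y ≠ 0 → x + y ≠ 0 → min (u x) (u y) ≤ u (x + y))

open Classical in
noncomputable def ofNeZero : AddValuation L (WithTop ℚ) :=
  AddValuation.of (fun x => if x = 0 then ⊤ else (u x : WithTop ℚ)) (if_pos rfl)
    (by
      have h := hmul 1 1 one_ne_zero one_ne_zero
      rw [mul_one] at h
      simp only [one_ne_zero, if_false, WithTop.coe_eq_zero]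
      linarith)
    (by
      intro x y
      by_cases hx : x = 0
      · simp [hx]
      by_cases hy : y = 0
      · simp [hy]
      by_cases hxy : x + y = 0
      · simp [hxy]
      simp only [hx, hy, hxy, if_false, ← WithTop.coe_min, WithTop.coe_le_coe]
      exact hadd x y hx hy hxy)
    (by
      intro x y
      by_cases hx : x = 0
      · simp [hx]
      by_cases hy : y = 0
      · simp [hy]
      simp only [hx, hy, mul_ne_zero hx hy, if_false, ← WithTop.coe_add, hmul x y hx hy])

variable {u hmul hadd}

theorem ofNeZero_of_ne_zero {x : L} (hx : x ≠ 0) : ofNeZero u hmul hadd x = u x := by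
  simp [ofNeZero, hx]

theorem coe_le_ofNeZero {r : ℚ} {x : L} (h : r ≤ u x) :
    (r : WithTop ℚ) ≤ ofNeZero u hmul hadd x := by
  by_cases hx : x = 0
  · simp [ofNeZero, hx]
  · rw [ofNeZero_of_ne_zero hx]
    exact WithTop.coe_le_coe.2 h

theorem ofNeZero_eq_zero_of_sq {x : L} (hx : x ≠ 0) (h : u (x ^ 2) = 0) :
    ofNeZero u hmul hadd x = 0 := by
  rw [sq, hmul x x hx hx] at h
  rw [ofNeZero_of_ne_zero hx]
  exact_mod_cast (by linarith : u x = 0)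

end OfNeZero

variable {R Γ : Type*} [CommRing R] [LinearOrderedAddCommMonoidWithTop Γ] (V : AddValuation R Γ)
  {ι : Type*} [Fintype ι] [DecidableEq ι]

def integer : Subring R where
  carrier := {x | 0 ≤ V x}
  mul_mem' {x y} hx hy := by simpa [V.map_mul] using add_nonneg hx hy
  one_mem' := V.map_one.ge
  add_mem' := V.map_le_add
  zero_mem' := show 0 ≤ V 0 by simp
  neg_mem' {x} hx := by simpa [V.map_neg] using hx

theorem mem_integer_iff {x : R} : x ∈ V.integer ↔ 0 ≤ V x := Iff.rfl

theorem map_nonneg_adjugate_apply {E : Matrix ι ι R} (hE : ∀ i j, 0 ≤ V (E i j)) (i j : ι) :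
    0 ≤ V (E.adjugate i j) := by
  let E' : Matrix ι ι V.integer := Matrix.of fun i j => ⟨E i j, hE i j⟩
  have hE' : V.integer.subtype.mapMatrix E' = E := rfl
  rw [← V.mem_integer_iff, ← hE', ← RingHom.map_adjugate]
  exact (E'.adjugate i j).2

theorem le_map_of_mulVec_eq {E : Matrix ι ι R} (hE : ∀ i j, 0 ≤ V (E i j)) (hdet : V E.det = 0)
    {x c : ι → R} (hx : E *ᵥ x = c) {r : Γ} (hc : ∀ j, r ≤ V (c j)) (i : ι) : r ≤ V (x i) := by
  have hcramer : E.det • x = E.adjugate *ᵥ c := by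
    rw [← hx, Matrix.mulVec_mulVec, Matrix.adjugate_mul, Matrix.smul_mulVec, Matrix.one_mulVec]
  calc r ≤ V ((E.adjugate *ᵥ c) i) :=
        V.map_le_sum fun j _ => by
          simpa [V.map_mul] using add_le_add (V.map_nonneg_adjugate_apply hE i j) (hc j)
    _ = V (x i) := by rw [← hcramer, Pi.smul_apply, smul_eq_mul, V.map_mul, hdet, zero_add]

end AddValuation

section Embeddings

variable {K M L : Type*} {ι : Type*} [Fintype ι]

theorem transpose_mulVec_algebraMap_repr [CommSemiring K] [Semiring M] [Algebra K M]
    [CommSemiring L] [Algebra K L] (ω : Module.Basis ι K M) (σ : ι → (M →ₐ[K] L)) (y : M) :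
    (Matrix.of fun i j => σ j (ω i))ᵀ *ᵥ (fun i => algebraMap K L (ω.repr y i)) =
      fun j => σ j y := by
  funext j
  conv_rhs => rw [← ω.sum_repr y]
  simp [Matrix.mulVec, dotProduct, Algebra.smul_def, mul_comm]

theorem det_embeddings_ne_zero [Field K] [Field M] [Field L] [Algebra K M] [Algebra K L]
    [FiniteDimensional K M] [Algebra.IsSeparable K M] [IsAlgClosed L] [DecidableEq ι]
    (ω : Module.Basis ι K M) {σ : ι → (M →ₐ[K] L)} (hσ : Function.Injective σ) :
    (Matrix.of fun i j => σ j (ω i)).det ≠ 0 := by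
  have hσ' : Function.Bijective σ := (Fintype.bijective_iff_injective_and_card σ).2
    ⟨hσ, by rw [AlgHom.card, Module.finrank_eq_card_basis ω]⟩
  have hmatrix : Algebra.embeddingsMatrixReindex K L ω (Equiv.ofBijective σ hσ') =
      Matrix.of fun i j => σ j (ω i) := by
    ext i j
    simp [Algebra.embeddingsMatrixReindex, Algebra.embeddingsMatrix]
  intro h
  have hdiscr := Algebra.discr_eq_det_embeddingsMatrixReindex_pow_two K L ω
    (Equiv.ofBijective σ hσ')
  rw [hmatrix, h, zero_pow two_ne_zero, map_eq_zero] at hdiscr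
  exact Algebra.discr_not_zero_of_basis K ω hdiscr

theorem AddValuation.le_map_algebraMap_repr {Γ : Type*} [CommSemiring K] [Semiring M]
    [Algebra K M] [CommRing L] [Algebra K L] [LinearOrderedAddCommMonoidWithTop Γ]
    [DecidableEq ι] (V : AddValuation L Γ) (ω : Module.Basis ι K M) (σ : ι → (M →ₐ[K] L))
    (hint : ∀ i j, 0 ≤ V (σ j (ω i))) (hdet : V (Matrix.of fun i j => σ j (ω i)).det = 0)
    {y : M} {r : Γ} (hy : ∀ j, r ≤ V (σ j y)) (i : ι) :
    r ≤ V (algebraMap K L (ω.repr y i)) :=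
  V.le_map_of_mulVec_eq (E := (Matrix.of fun i j => σ j (ω i))ᵀ) (fun i j => hint j i)
    (by rwa [Matrix.det_transpose])
    (transpose_mulVec_algebraMap_repr ω σ y) hy i

end Embeddings

theorem Module.Basis.repr_sub_algebraMap_of_ne {K M ι : Type*} [CommRing K] [Ring M]
    [Algebra K M] {ω : Module.Basis ι K M} {i₀ : ι} (hω : ω i₀ = 1) (y : M) (c : K) {i : ι}
    (hi : i ≠ i₀) :
    ω.repr (y - algebraMap K M c) i = ω.repr y i := by
  rw [Algebra.algebraMap_eq_smul_one, ← hω, map_sub, map_smul, ω.repr_self]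
  simp [Finsupp.single_eq_of_ne hi]

theorem Module.Basis.algebraMap_repr_eq_self {K M ι : Type*} [Fintype ι] [CommSemiring K]
    [Semiring M] [Algebra K M] {ω : Module.Basis ι K M} {i₀ : ι} (hω : ω i₀ = 1) {y : M}
    (hy : ∀ i ≠ i₀, ω.repr y i = 0) : algebraMap K M (ω.repr y i₀) = y := by
  conv_rhs => rw [← ω.sum_repr y]
  rw [Finset.sum_eq_single i₀ (fun i _ hi => by rw [hy i hi, zero_smul]) (by simp), hω,
    Algebra.algebraMap_eq_smul_one]

theorem stmt_15_general (K M : Type*) [Field K] [Field M] [Algebra K M]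
    [FiniteDimensional K M] [Algebra.IsSeparable K M]
    (n : ℕ) (hn : 0 < n) (ω : Module.Basis (Fin n) K M) (hω1 : ω ⟨0, hn⟩ = 1)
    (a : Fin n → K) (w : M) (hwcoord : w = ∑ i, a i • ω i)
    (σ : Fin n → (M →ₐ[K] AlgebraicClosure K)) (hσ : Function.Injective σ)
    (ι : Type*) (𝒱 : Finset ι)
    (v : ι → AlgebraicClosure K → ℚ)
    (hmul : ∀ A ∈ 𝒱, ∀ x y, x ≠ 0 → y ≠ 0 → v A (x * y) = v A x + v A y)
    (hadd : ∀ A ∈ 𝒱, ∀ x y, x ≠ 0 → y ≠ 0 → x + y ≠ 0 →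
      min (v A x) (v A y) ≤ v A (x + y))
    (hint : ∀ A ∈ 𝒱, ∀ i j, 0 ≤ v A (σ j (ω i)))
    (hdet : ∀ A ∈ 𝒱, v A ((Matrix.of fun i j => σ j (ω i)).det ^ 2) = 0)
    (b : ι → K)
    (hcong : ∀ A ∈ 𝒱, ∀ j, 1 ≤ v A (σ j w - algebraMap K (AlgebraicClosure K) (b A)))
    (hK : K → ℕ)
    (hcount : ∀ x : K, x ≠ 0 →
      (𝒱.filter fun A => 0 < v A (algebraMap K (AlgebraicClosure K) x)).card ≤ hK x)
    (hbig : ∀ i : Fin n, (i : ℕ) ≠ 0 → a i ≠ 0 → hK (a i) < 𝒱.card) :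
    ∃ x : K, algebraMap K M x = w := by
  have ha : ⇑(ω.repr w) = a := hwcoord ▸ ω.repr_sum_self a
  have hE := det_embeddings_ne_zero ω hσ
  have hcoef (i : Fin n) (hi : (i : ℕ) ≠ 0) : a i = 0 := by
    by_contra hai
    have hpos (A : ι) (hA : A ∈ 𝒱) : 0 < v A (algebraMap K _ (a i)) := by
      let V := AddValuation.ofNeZero (v A) (hmul A hA) (hadd A hA)
      have h1 : ((1 : ℚ) : WithTop ℚ) ≤
          V (algebraMap K _ (ω.repr (w - algebraMap K M (b A)) i)) :=
        V.le_map_algebraMap_repr ω σ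
          (fun i j => by exact_mod_cast AddValuation.coe_le_ofNeZero (hint A hA i j))
          (AddValuation.ofNeZero_eq_zero_of_sq hE (hdet A hA))
          (fun j => AddValuation.coe_le_ofNeZero (by simpa using hcong A hA j)) i
      rw [ω.repr_sub_algebraMap_of_ne hω1 _ _ (Fin.val_ne_iff.1 hi), ha,
        AddValuation.ofNeZero_of_ne_zero (by simpa using hai)] at h1
      exact one_pos.trans_le (WithTop.coe_le_coe.1 h1)
    have h := hcount (a i) hai
    rw [Finset.filter_true_of_mem hpos] at h
    exact (hbig i hi hai).not_ge h
  refine ⟨a ⟨0, hn⟩, ?_⟩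
  rw [← ha]
  exact ω.algebraMap_repr_eq_self hω1 fun i hi => ha ▸ hcoef i (Fin.val_ne_iff.2 hi)

/-- (Weak Vertical Method.)  Let `M/K` be a finite separable extension of function fields
with embeddings `σ j : M → K̄` over `K`, basis `ω` of `M/K` with `ω 0 = 1`, and
`w = ∑ aᵢ ωᵢ`.  Let `𝒱` be a finite set of primes of `K`, each given by a (normalized)
valuation `v A` extended to the algebraic closure, such that:
`w` and the `ωᵢ` (and all conjugates) are integral at every `A ∈ 𝒱`;
`det (σ j (ω i)) ^ 2` is a unit at every `A ∈ 𝒱`;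
for every `A ∈ 𝒱` there is `b A ∈ K` with `w ≡ b A mod A`, i.e.
`v A (σ j w - b A) ≥ 1` for every conjugate (this encodes
`ord_𝔠 (w - b(𝔄)) ≥ e(𝔠/𝔄)` for every `M`-factor `𝔠` of `𝔄`);
and `|𝒱|` exceeds the `K`-height of every nonzero `aᵢ`, `i ≥ 1` (where the height
function `hK` satisfies: a nonzero element has no more distinct zeros among `𝒱` than
its height).  Then `w ∈ K`. -/
theorem stmt_15 (K M : Type*) [Field K] [Field M] [Algebra K M]
    [FiniteDimensional K M] [Algebra.IsSeparable K M]
    (n : ℕ) (hn : 0 < n) (ω : Module.Basis (Fin n) K M) (hω1 : ω ⟨0, hn⟩ = 1)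
    (a : Fin n → K) (w : M) (hwcoord : w = ∑ i, a i • ω i)
    (σ : Fin n → (M →ₐ[K] AlgebraicClosure K)) (hσ : Function.Injective σ)
    (ι : Type*) (𝒱 : Finset ι)
    (v : ι → AlgebraicClosure K → ℚ)
    (hzero : ∀ A ∈ 𝒱, v A 0 = 0)
    (hmul : ∀ A ∈ 𝒱, ∀ x y, x ≠ 0 → y ≠ 0 → v A (x * y) = v A x + v A y)
    (hadd : ∀ A ∈ 𝒱, ∀ x y, x ≠ 0 → y ≠ 0 → x + y ≠ 0 →
      min (v A x) (v A y) ≤ v A (x + y))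
    (hunif : ∀ A ∈ 𝒱, ∃ B : K, v A (algebraMap K (AlgebraicClosure K) B) = 1)
    (hint : ∀ A ∈ 𝒱, ∀ i j, 0 ≤ v A (σ j (ω i)))
    (hwint : ∀ A ∈ 𝒱, ∀ j, 0 ≤ v A (σ j w))
    (hdet : ∀ A ∈ 𝒱, v A ((Matrix.of fun i j => σ j (ω i)).det ^ 2) = 0)
    (b : ι → K)
    (hcong : ∀ A ∈ 𝒱, ∀ j, 1 ≤ v A (σ j w - algebraMap K (AlgebraicClosure K) (b A)))
    (hK : K → ℕ)
    (hcount : ∀ x : K, x ≠ 0 →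
      (𝒱.filter fun A => 0 < v A (algebraMap K (AlgebraicClosure K) x)).card ≤ hK x)
    (hbig : ∀ i : Fin n, (i : ℕ) ≠ 0 → a i ≠ 0 → hK (a i) < 𝒱.card) :
    ∃ x : K, algebraMap K M x = w :=
  stmt_15_general K M n hn ω hω1 a w hwcoord σ hσ ι 𝒱 v hmul hadd hint hdet b hcong hK hcount hbig
end

section
/- Let K be a function field over a constant field G_p algebraic over F_p, with G_p containing a primitive q-th root of unity and admitting a cyclic extension of degree q (q prime ≠ char K). Let 𝔭 be a prime of K with ord_𝔭 t ≥ 0, where t ∈ K has pole 𝔭_∞ with ramification degree e over G_p(t). Then for every sufficiently large positive integer n there exists b ∈ K such that b is not a q-th power modulo 𝔭 and ord_{𝔭_∞} b = -ne. -/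
/-!
Perturb `b₀` by `z = t ^ m * P(t)`. Since `ord_𝔭 z > 0`, the element `b₀ + z` has the same
residue as `b₀` and so is still not a `q`-th power modulo `𝔭`; since `ord_{𝔭_∞} z = -(m + deg P) e`
is eventually below `ord_{𝔭_∞} b₀`, it is also the order of `b₀ + z`.

The perturbation argument needs `b₀ - y ^ q ≠ 0` for integral `y`. This is not automatic, because
the hypotheses say nothing about the value of `ord_𝔭` at `0`: if `b₀ = y ^ q`, then
`b₀ - (y u) ^ q = y ^ q (1 - u ^ q)` has positive order for the principal unit `u = 1 + P(t)`,
and `u ^ q ≠ 1` because `u` is transcendental.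
-/

open Polynomial Finset

/-- An `ℤ`-valued additive valuation whose value at `0` is left unconstrained. -/
structure IsIntAddValuation {K : Type*} [Field K] (v : K → ℤ) : Prop where
  map_mul : ∀ x y : K, x ≠ 0 → y ≠ 0 → v (x * y) = v x + v y
  min_le_map_add : ∀ x y : K, x ≠ 0 → y ≠ 0 → x + y ≠ 0 → min (v x) (v y) ≤ v (x + y)

/-- `b` is not an `n`-th power modulo the prime of `v`. -/
def NotPowMod {K : Type*} [Field K] (v : K → ℤ) (n : ℕ) (b : K) : Prop :=
  ∀ y : K, 0 ≤ v y → v (b - y ^ n) ≤ 0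

theorem Transcendental.pow_ne_one {R A : Type*} [CommRing R] [Nontrivial R] [Ring A] [Algebra R A]
    {r : A} (ht : Transcendental R r) {n : ℕ} (hn : n ≠ 0) : r ^ n ≠ 1 :=
  fun h ↦ ht.pow (Nat.pos_of_ne_zero hn) (h ▸ isAlgebraic_one)

theorem Transcendental.aeval_add_one {F A : Type*} [CommRing F] [Nontrivial F] [Ring A]
    [Algebra F A] {t : A} (ht : Transcendental F t) {P : F[X]} (hP : P.Monic)
    (hdeg : P.natDegree ≠ 0) :
    Transcendental F (Polynomial.aeval t P + 1) := by
  have hdeg1 : (P + 1).natDegree = P.natDegree :=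
    natDegree_add_eq_left_of_natDegree_lt (by rw [natDegree_one]; omega)
  have hP1 : (P + 1).Monic := hP.add_of_left <| by
    rw [degree_one]; exact natDegree_pos_iff_degree_pos.1 (Nat.pos_of_ne_zero hdeg)
  simpa using ht.aeval (P + 1) (hdeg1 ▸ hdeg) (hP1.leadingCoeff ▸ one_mem _)

namespace IsIntAddValuation

variable {K : Type*} [Field K] {v : K → ℤ}

theorem map_one (hv : IsIntAddValuation v) : v 1 = 0 := by
  have h := hv.map_mul 1 1 one_ne_zero one_ne_zero
  rw [mul_one] at h
  omega

theorem map_neg (hv : IsIntAddValuation v) {x : K} (hx : x ≠ 0) : v (-x) = v x := by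
  have hm1 : (-1 : K) ≠ 0 := neg_ne_zero.2 one_ne_zero
  have h := hv.map_mul (-1) (-1) hm1 hm1
  rw [neg_mul_neg, one_mul, hv.map_one] at h
  rw [← neg_one_mul, hv.map_mul _ _ hm1 hx]
  omega

theorem map_pow (hv : IsIntAddValuation v) {x : K} (hx : x ≠ 0) (k : ℕ) :
    v (x ^ k) = k * v x := by
  induction k with
  | zero => simp [hv.map_one]
  | succ k ih =>
    rw [pow_succ, hv.map_mul _ _ (pow_ne_zero _ hx) hx, ih]
    push_cast
    ring

theorem add_ne_zero_of_lt (hv : IsIntAddValuation v) {x y : K} (hx : x ≠ 0) (hlt : v x < v y) :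
    x + y ≠ 0 := by
  intro h
  rw [eq_neg_of_add_eq_zero_right h, hv.map_neg hx] at hlt
  exact lt_irrefl _ hlt

theorem map_add_of_lt (hv : IsIntAddValuation v) {x y : K} (hx : x ≠ 0) (hlt : v x < v y) :
    v (x + y) = v x := by
  rcases eq_or_ne y 0 with rfl | hy
  · rw [add_zero]
  have hxy := hv.add_ne_zero_of_lt hx hlt
  have h1 := hv.min_le_map_add x y hx hy hxy
  have h2 := hv.min_le_map_add (x + y) (-y) hxy (neg_ne_zero.2 hy) (by simpa using hx)
  rw [add_neg_cancel_right, hv.map_neg hy] at h2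
  omega

theorem le_map_sum (hv : IsIntAddValuation v) {ι : Type*} {c : ℤ} {s : Finset ι} {f : ι → K}
    (hf : ∀ i ∈ s, f i ≠ 0 → c ≤ v (f i)) (hs : ∑ i ∈ s, f i ≠ 0) :
    c ≤ v (∑ i ∈ s, f i) := by
  induction s using Finset.cons_induction with
  | empty => simp at hs
  | cons a s ha ih =>
    rw [sum_cons] at hs ⊢
    have ih' := fun h ↦ ih (fun i hi ↦ hf i (mem_cons_of_mem hi)) h
    by_cases h1 : f a = 0
    · rw [h1, zero_add] at hs ⊢
      exact ih' hs
    by_cases h2 : ∑ i ∈ s, f i = 0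
    · rw [h2, add_zero]
      exact hf a (mem_cons_self _ _) h1
    have := hv.min_le_map_add _ _ h1 h2 hs
    have := hf a (mem_cons_self _ _) h1
    have := ih' h2
    omega

theorem ne_zero_of_map_sub_one_pos (hv : IsIntAddValuation v) {u : K} (hu : 0 < v (u - 1)) :
    u ≠ 0 := by
  rintro rfl
  rw [zero_sub, hv.map_neg one_ne_zero, hv.map_one] at hu
  exact lt_irrefl _ hu

theorem map_eq_zero_of_map_sub_one_pos (hv : IsIntAddValuation v) {u : K} (hu : 0 < v (u - 1)) :
    v u = 0 := by
  rcases eq_or_ne (u - 1) 0 with h | h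
  · rw [sub_eq_zero.1 h, hv.map_one]
  rw [← sub_add_cancel u 1, add_comm, hv.map_add_of_lt one_ne_zero (by rwa [hv.map_one]),
    hv.map_one]

theorem map_pow_sub_one_pos (hv : IsIntAddValuation v) {u : K} (hu : 0 < v (u - 1)) {n : ℕ}
    (hun : u ^ n ≠ 1) : 0 < v (u ^ n - 1) := by
  have hu0 := hv.ne_zero_of_map_sub_one_pos hu
  have hgeom := geom_sum_mul u n
  have hne : (∑ i ∈ range n, u ^ i) * (u - 1) ≠ 0 := hgeom ▸ sub_ne_zero.2 hun
  have hsum : 0 ≤ v (∑ i ∈ range n, u ^ i) := by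
    refine hv.le_map_sum (fun i _ _ ↦ ?_) (left_ne_zero_of_mul hne)
    rw [hv.map_pow hu0, hv.map_eq_zero_of_map_sub_one_pos hu, mul_zero]
  rw [← hgeom, hv.map_mul _ _ (left_ne_zero_of_mul hne) (right_ne_zero_of_mul hne)]
  omega

section Polynomial

variable {F : Type*} [Field F] [Algebra F K]

theorem lt_map_sum_smul_pow (hv : IsIntAddValuation v)
    (hc : ∀ a : F, a ≠ 0 → v (algebraMap F K a) = 0) {t : K} (ht0 : t ≠ 0) (ht : v t < 0)
    (c : ℕ → F) (m : ℕ) (hs : ∑ i ∈ range m, c i • t ^ i ≠ 0) :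
    m * v t < v (∑ i ∈ range m, c i • t ^ i) := by
  refine hv.le_map_sum (fun i hi hi0 ↦ ?_) hs
  have hci : c i ≠ 0 := fun h ↦ hi0 (by rw [h, zero_smul])
  rw [Algebra.smul_def, hv.map_mul _ _ ((_root_.map_ne_zero _).2 hci) (pow_ne_zero _ ht0),
    hc _ hci, hv.map_pow ht0, zero_add]
  have : (i : ℤ) + 1 ≤ m := by exact_mod_cast mem_range.1 hi
  nlinarith

theorem map_aeval_of_monic (hv : IsIntAddValuation v)
    (hc : ∀ a : F, a ≠ 0 → v (algebraMap F K a) = 0) {t : K} (ht0 : t ≠ 0) (ht : v t < 0)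
    {P : F[X]} (hP : P.Monic) : v (aeval t P) = P.natDegree * v t := by
  rw [aeval_eq_sum_range, sum_range_succ, hP.coeff_natDegree, one_smul, add_comm,
    ← hv.map_pow ht0]
  rcases eq_or_ne (∑ i ∈ range P.natDegree, P.coeff i • t ^ i) 0 with h | h
  · rw [h, add_zero]
  · refine hv.map_add_of_lt (pow_ne_zero _ ht0) ?_
    rw [hv.map_pow ht0]
    exact hv.lt_map_sum_smul_pow hc ht0 ht _ _ h

end Polynomial

end IsIntAddValuation

namespace NotPowMod

variable {K : Type*} [Field K] {v : K → ℤ} {n : ℕ} {b : K}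

theorem sub_pow_ne_zero (h : NotPowMod v n b) (hv : IsIntAddValuation v) (hb : b ≠ 0) {u : K}
    (hu : 0 < v (u - 1)) (hun : u ^ n ≠ 1) {y : K} (hy : 0 ≤ v y) : b - y ^ n ≠ 0 := by
  intro hby
  rw [sub_eq_zero] at hby
  have hn : n ≠ 0 := by
    rintro rfl
    exact hun (pow_zero u)
  have hy0 : y ≠ 0 := by
    rintro rfl
    exact hb (hby.trans (zero_pow hn))
  have hvu := hv.map_eq_zero_of_map_sub_one_pos hu
  have hu0 := hv.ne_zero_of_map_sub_one_pos hu
  have hyu : 0 ≤ v (y * u) := by rw [hv.map_mul _ _ hy0 hu0, hvu, add_zero]; exact hy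
  have hfactor : b - (y * u) ^ n = y ^ n * -(u ^ n - 1) := by rw [hby]; ring
  have hle := h _ hyu
  rw [hfactor, hv.map_mul _ _ (pow_ne_zero _ hy0) (neg_ne_zero.2 (sub_ne_zero.2 hun)),
    hv.map_neg (sub_ne_zero.2 hun), hv.map_pow hy0] at hle
  have hpos := hv.map_pow_sub_one_pos hu hun
  nlinarith

theorem add (h : NotPowMod v n b) (hv : IsIntAddValuation v)
    (hne : ∀ y : K, 0 ≤ v y → b - y ^ n ≠ 0) {z : K} (hz : 0 < v z) : NotPowMod v n (b + z) := by
  intro y hy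
  rw [add_sub_right_comm, hv.map_add_of_lt (hne y hy) (by linarith [h y hy])]
  exact h y hy

end NotPowMod

theorem stmt_19_general (q : ℕ) (hq : q.Prime)
    (F : Type*) [Field F]
    (K : Type*) [Field K] [Algebra F K]
    (vp vinf : K → ℤ)
    (hpmul : ∀ x y : K, x ≠ 0 → y ≠ 0 → vp (x * y) = vp x + vp y)
    (hpadd : ∀ x y : K, x ≠ 0 → y ≠ 0 → x + y ≠ 0 → min (vp x) (vp y) ≤ vp (x + y))
    (himul : ∀ x y : K, x ≠ 0 → y ≠ 0 → vinf (x * y) = vinf x + vinf y)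
    (hiadd : ∀ x y : K, x ≠ 0 → y ≠ 0 → x + y ≠ 0 → min (vinf x) (vinf y) ≤ vinf (x + y))
    (hiconst : ∀ a : F, a ≠ 0 → vinf (algebraMap F K a) = 0)
    (t : K) (htrans : ∀ g : Polynomial F, Polynomial.aeval t g = 0 → g = 0)
    (ht : 0 ≤ vp t)
    (e : ℕ) (he : 0 < e) (hvinft : vinf t = -(e : ℤ))
    (P : Polynomial F) (hPmonic : P.Monic)
    (hPbelow : 0 < vp (Polynomial.aeval t P))
    (b₀ : K) (hb₀ne : b₀ ≠ 0) (hb₀ : vp b₀ = 0)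
    (hb₀q : ∀ y : K, 0 ≤ vp y → vp (b₀ - y ^ q) ≤ 0) :
    ∃ N : ℕ, ∀ n : ℕ, N ≤ n → ∃ b : K,
      vinf b = -((n * e : ℕ) : ℤ) ∧ vp b = 0 ∧
        ∀ y : K, 0 ≤ vp y → vp (b - y ^ q) ≤ 0 := by
  have hv : IsIntAddValuation vp := ⟨hpmul, hpadd⟩
  have hw : IsIntAddValuation vinf := ⟨himul, hiadd⟩
  have htr : Transcendental F t := transcendental_iff.2 htrans
  have ht0 : t ≠ 0 := fun h ↦ X_ne_zero (htrans X (by simp [h]))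
  set s := aeval t P
  have hs0 : s ≠ 0 := fun h ↦ hPmonic.ne_zero (htrans P h)
  have hdeg : P.natDegree ≠ 0 := fun h ↦ by
    simp [s, hPmonic.natDegree_eq_zero.1 h, hv.map_one] at hPbelow
  have hb₀pow : ∀ y : K, 0 ≤ vp y → b₀ - y ^ q ≠ 0 := fun y hy ↦
    NotPowMod.sub_pow_ne_zero hb₀q hv hb₀ne (u := s + 1) (by simpa using hPbelow)
      ((htr.aeval_add_one hPmonic hdeg).pow_ne_one hq.ne_zero) hy
  have hvinfs : vinf s = P.natDegree * -(e : ℤ) := by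
    rw [← hvinft]; exact hw.map_aeval_of_monic hiconst ht0 (by omega) hPmonic
  refine ⟨P.natDegree + (vinf b₀).natAbs + 1, fun n hn ↦ ?_⟩
  obtain ⟨m, rfl⟩ : ∃ m, n = m + P.natDegree := ⟨n - P.natDegree, by omega⟩
  have hz0 : t ^ m * s ≠ 0 := mul_ne_zero (pow_ne_zero _ ht0) hs0
  have hvz : 0 < vp (t ^ m * s) := by
    rw [hv.map_mul _ _ (pow_ne_zero _ ht0) hs0, hv.map_pow ht0]; positivity
  have hvinfz : vinf (t ^ m * s) = -(((m + P.natDegree) * e : ℕ) : ℤ) := by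
    rw [hw.map_mul _ _ (pow_ne_zero _ ht0) hs0, hw.map_pow ht0, hvinft, hvinfs]
    push_cast
    ring
  refine ⟨b₀ + t ^ m * s, ?_, ?_, NotPowMod.add hb₀q hv hb₀pow hvz⟩
  · have : m + P.natDegree ≤ (m + P.natDegree) * e := Nat.le_mul_of_pos_right _ he
    rw [add_comm, hw.map_add_of_lt hz0 (by omega), hvinfz]
  · rw [hv.map_add_of_lt hb₀ne (by omega), hb₀]

/-- Let `K` be a function field over constants `G_p` (`= F`) algebraic over `F_p`, with
`G_p` containing a primitive `q`-th root of unity and admitting a cyclic extension of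
degree `q` (`q` prime `≠ p`, so that the residue field of `𝔭` contains an element `b₀`
that is not a `q`-th power mod `𝔭`).  Let `𝔭` (valuation `v𝔭`) be a prime of `K` with
`ord_𝔭 t ≥ 0`, lying over the prime of `G_p(t)` given by the monic irreducible
polynomial `P`, and let `𝔭_∞` (valuation `v∞`) be the pole of `t`, with ramification
degree `e` over `G_p(t)` (so `ord_{𝔭_∞} t = -e`).  Then for every sufficiently large
`n` there exists `b ∈ K` that is not a `q`-th power modulo `𝔭` and has
`ord_{𝔭_∞} b = -n·e`. -/
theorem stmt_19 (p q : ℕ) (hp : p.Prime) (hq : q.Prime) (hpq : p ≠ q)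
    (F : Type*) [Field F] [CharP F p] (ξ : F) (hξ : IsPrimitiveRoot ξ q)
    (K : Type*) [Field K] [Algebra F K]
    (vp vinf : K → ℤ)
    (hpmul : ∀ x y : K, x ≠ 0 → y ≠ 0 → vp (x * y) = vp x + vp y)
    (hpadd : ∀ x y : K, x ≠ 0 → y ≠ 0 → x + y ≠ 0 → min (vp x) (vp y) ≤ vp (x + y))
    (hpconst : ∀ a : F, a ≠ 0 → vp (algebraMap F K a) = 0)
    (himul : ∀ x y : K, x ≠ 0 → y ≠ 0 → vinf (x * y) = vinf x + vinf y)
    (hiadd : ∀ x y : K, x ≠ 0 → y ≠ 0 → x + y ≠ 0 → min (vinf x) (vinf y) ≤ vinf (x + y))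
    (hiconst : ∀ a : F, a ≠ 0 → vinf (algebraMap F K a) = 0)
    (t : K) (htrans : ∀ g : Polynomial F, Polynomial.aeval t g = 0 → g = 0)
    (ht : 0 ≤ vp t)
    (e : ℕ) (he : 0 < e) (hvinft : vinf t = -(e : ℤ))
    (P : Polynomial F) (hPmonic : P.Monic) (hPirr : Irreducible P)
    (hPbelow : 0 < vp (Polynomial.aeval t P))
    (b₀ : K) (hb₀ne : b₀ ≠ 0) (hb₀ : vp b₀ = 0)
    (hb₀q : ∀ y : K, 0 ≤ vp y → vp (b₀ - y ^ q) ≤ 0) :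
    ∃ N : ℕ, ∀ n : ℕ, N ≤ n → ∃ b : K,
      vinf b = -((n * e : ℕ) : ℤ) ∧ vp b = 0 ∧
        ∀ y : K, 0 ≤ vp y → vp (b - y ^ q) ≤ 0 :=
  stmt_19_general q hq F K vp vinf hpmul hpadd himul hiadd hiconst t htrans ht e he hvinft P hPmonic
    hPbelow b₀ hb₀ne hb₀ hb₀q
end
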